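/- Let T be an operator system and suppose S_k →^i S, i.e. S is an operator system which is the union of an increasing sequence {S_k : k ∈ ℕ} of operator subsystems with inclusion maps i_k : S_k ⊆ S_{k+1}. Then S ⊗_max T is the inductive limit of the inductive sequence {S_k ⊗_max T, i_k ⊗ id_T : k ∈ ℕ}; more precisely, the canonical map Ψ : lim→(S_k ⊗_max T) → S ⊗_max T induced by the ucp maps i^{(k)} ⊗ id_T is a unital complete order isomorphism. -/

import Mathlib

open scoped ComplexOrder TensorProduct

noncomputable section

/-- Conjugation `a A a*` of a matrix `A` over a complex `*`-vector space by a complex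
scalar matrix `a`. -/
def matCong {V : Type} [AddCommGroup V] [Module ℂ V] {ι κ : Type} [Fintype κ]
    (a : Matrix ι κ ℂ) (A : Matrix κ κ V) : Matrix ι ι V :=
  Matrix.of fun i j => ∑ s : κ, ∑ t : κ, (a i s * star (a j t)) • A s t

/-- The `n × n` matrix with a given element `e` on the diagonal and `0` elsewhere. -/
def unitMat {V : Type} [AddCommGroup V] (e : V) (n : ℕ) : Matrix (Fin n) (Fin n) V :=
  Matrix.of fun i j => if i = j then e else 0

/-- The `1 × 1` matrix with entry `x`. -/
def oneMat {V : Type} (x : V) : Matrix (Fin 1) (Fin 1) V :=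
  Matrix.of fun _ _ => x

/-- A matrix ordered `*`-vector space with a distinguished matrix order unit:
`pos n` is the cone in `Mₙ(V)` and `one` is the order unit.  The axioms making such
data an (abstract) operator system are collected in `PreOS.IsOpSys`. -/
structure PreOS : Type 1 where
  V : Type
  [grp : AddCommGroup V]
  [mod : Module ℂ V]
  [sam : StarAddMonoid V]
  [smod : StarModule ℂ V]
  pos : ∀ n : ℕ, Set (Matrix (Fin n) (Fin n) V)
  one : V

attribute [instance] PreOS.grp PreOS.mod PreOS.sam PreOS.smod

/-- The axioms of an operator system: a matrix ordered `*`-vector space with a proper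
matrix ordering and an Archimedean matrix order unit. -/
structure PreOS.IsOpSys (P : PreOS) : Prop where
  star_mem : ∀ n, ∀ A ∈ P.pos n, star A = A
  add_mem : ∀ n, ∀ A ∈ P.pos n, ∀ B ∈ P.pos n, A + B ∈ P.pos n
  smul_mem : ∀ n, ∀ A ∈ P.pos n, ∀ r : ℝ, 0 ≤ r → (r : ℂ) • A ∈ P.pos n
  cong_mem : ∀ (m n : ℕ) (a : Matrix (Fin m) (Fin n) ℂ), ∀ A ∈ P.pos n,
    matCong a A ∈ P.pos m
  proper : ∀ n, ∀ A ∈ P.pos n, -A ∈ P.pos n → A = 0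
  star_one : star P.one = P.one
  one_mem : ∀ n, unitMat P.one n ∈ P.pos n
  orderUnit : ∀ n (A : Matrix (Fin n) (Fin n) P.V), star A = A →
    ∃ r : ℝ, 0 < r ∧ (r : ℂ) • unitMat P.one n + A ∈ P.pos n
  arch : ∀ n (A : Matrix (Fin n) (Fin n) P.V), star A = A →
    (∀ ε : ℝ, 0 < ε → (ε : ℂ) • unitMat P.one n + A ∈ P.pos n) → A ∈ P.pos n

/-- A unital self-adjoint (`*`-preserving) linear map between matrix ordered spaces;
this is the underlying data of a unital completely positive map. -/
structure LinSU (P Q : PreOS) where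
  toLin : P.V →ₗ[ℂ] Q.V
  map_star : ∀ x, toLin (star x) = star (toLin x)
  map_one : toLin P.one = Q.one

/-- A unital completely positive map between matrix ordered `*`-vector spaces. -/
structure UCPmap (P Q : PreOS) extends LinSU P Q where
  map_pos : ∀ n, ∀ A ∈ P.pos n, A.map toLin ∈ Q.pos n

/-- The identity unital self-adjoint map. -/
def idLinSU (P : PreOS) : LinSU P P :=
  ⟨LinearMap.id, fun _ => rfl, rfl⟩

/-- A unital complete order monomorphism: injective and completely order reflecting. -/
structure IsCOMono {P Q : PreOS} (f : UCPmap P Q) : Prop where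
  inj : Function.Injective f.toLin
  reflect : ∀ n (A : Matrix (Fin n) (Fin n) P.V), A.map f.toLin ∈ Q.pos n → A ∈ P.pos n

/-! ## Operator subsystems -/

/-- A star-closed subspace containing the order unit: the data of an operator subsystem. -/
structure StarSubmodule (P : PreOS) where
  toSub : Submodule ℂ P.V
  star_mem' : ∀ x ∈ toSub, star x ∈ toSub
  one_mem' : P.one ∈ toSub

/-- The operator subsystem determined by a star-closed subspace containing the unit,
with the induced matrix cones. -/
def SubOS (P : PreOS) (W : StarSubmodule P) : PreOS :=
  letI : StarAddMonoid W.toSub :=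
    { star := fun x => ⟨star x.1, W.star_mem' x.1 x.2⟩
      star_involutive := fun x => Subtype.ext (star_star x.1)
      star_add := fun x y => Subtype.ext (star_add x.1 y.1) }
  letI : StarModule ℂ W.toSub := ⟨fun c x => Subtype.ext (star_smul c x.1)⟩
  { V := W.toSub
    pos := fun n => {A | A.map W.toSub.subtype ∈ P.pos n}
    one := ⟨P.one, W.one_mem'⟩ }

/-- The inclusion of a smaller operator subsystem into a bigger one. -/
def inclSub (P : PreOS) (W1 W2 : StarSubmodule P) (h : W1.toSub ≤ W2.toSub) :
    LinSU (SubOS P W1) (SubOS P W2) where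
  toLin := Submodule.inclusion h
  map_star := fun _ => rfl
  map_one := rfl

/-- The inclusion of an operator subsystem into the ambient system. -/
def subVal (P : PreOS) (W : StarSubmodule P) : LinSU (SubOS P W) P where
  toLin := W.toSub.subtype
  map_star := fun _ => rfl
  map_one := rfl

/-! ## The inductive limit construction -/

variable (S : ℕ → PreOS) (φ : ∀ k, LinSU (S k) (S (k + 1)))

/-- The space `S'` of eventually coherent sequences. -/
def coh : Submodule ℂ (∀ k, (S k).V) where
  carrier := {x | ∃ k0, ∀ k, k0 ≤ k → x (k + 1) = (φ k).toLin (x k)}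
  zero_mem' := ⟨0, fun k _ => by simp⟩
  add_mem' := by
    rintro x y ⟨a, ha⟩ ⟨b, hb⟩
    exact ⟨max a b, fun k hk => by
      simp [ha k (le_trans (le_max_left a b) hk), hb k (le_trans (le_max_right a b) hk)]⟩
  smul_mem' := by
    rintro c x ⟨a, ha⟩
    exact ⟨a, fun k hk => by simp [ha k hk]⟩

instance cohSAM : StarAddMonoid (coh S φ) where
  star x := ⟨star x.1, by
    obtain ⟨k0, h⟩ := x.2
    exact ⟨k0, fun k hk => by
      rw [Pi.star_apply, Pi.star_apply, h k hk, (φ k).map_star]⟩⟩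
  star_involutive x := Subtype.ext (star_star x.1)
  star_add x y := Subtype.ext (star_add x.1 y.1)

instance cohSMod : StarModule ℂ (coh S φ) := ⟨fun c x => Subtype.ext (star_smul c x.1)⟩

@[simp] lemma coh_star_coe (x : coh S φ) :
    ((star x : coh S φ) : ∀ k, (S k).V) = star (x : ∀ k, (S k).V) := rfl

/-- The subspace `K` of eventually zero (coherent) sequences. -/
def evK : Submodule ℂ (coh S φ) where
  carrier := {x | ∃ k0, ∀ k, k0 ≤ k → x.1 k = 0}
  zero_mem' := ⟨0, fun k _ => rfl⟩
  add_mem' := by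
    rintro x y ⟨a, ha⟩ ⟨b, hb⟩
    exact ⟨max a b, fun k hk => by
      show x.1 k + y.1 k = 0
      rw [ha k (le_trans (le_max_left a b) hk), hb k (le_trans (le_max_right a b) hk), add_zero]⟩
  smul_mem' := by
    rintro c x ⟨a, ha⟩
    exact ⟨a, fun k hk => by
      show c • x.1 k = 0
      rw [ha k hk, smul_zero]⟩

/-- The quotient space `S'/K`. -/
abbrev Qspace := coh S φ ⧸ evK S φ

lemma evK_star {x : coh S φ} (hx : x ∈ evK S φ) : star x ∈ evK S φ := by
  obtain ⟨k0, h⟩ := hx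
  exact ⟨k0, fun k hk => by
    show (star x.1) k = 0
    rw [Pi.star_apply, h k hk, star_zero]⟩

/-- The star operation on the quotient `S'/K`. -/
def qStar : Qspace S φ → Qspace S φ := fun x =>
  Quotient.liftOn' x (fun a => Submodule.Quotient.mk (star a)) (by
    intro a b h
    have hab : a - b ∈ evK S φ := by
      rw [← Submodule.Quotient.eq, ← Submodule.Quotient.mk''_eq_mk, ← Submodule.Quotient.mk''_eq_mk]
      exact Quotient.sound' h
    refine (Submodule.Quotient.eq _).2 ?_
    rw [← star_sub]
    exact evK_star S φ hab)

lemma qStar_mk (a : coh S φ) :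
    qStar S φ (Submodule.Quotient.mk a) = Submodule.Quotient.mk (star a) := rfl

instance qspaceSAM : StarAddMonoid (Qspace S φ) where
  star := qStar S φ
  star_involutive := fun x => Quotient.inductionOn' x fun a => by
    show qStar S φ (qStar S φ (Submodule.Quotient.mk a)) = Submodule.Quotient.mk a
    rw [qStar_mk, qStar_mk, star_star]
  star_add := fun x y => Quotient.inductionOn₂' x y fun a b => by
    show qStar S φ (Submodule.Quotient.mk a + Submodule.Quotient.mk b)
      = qStar S φ (Submodule.Quotient.mk a) + qStar S φ (Submodule.Quotient.mk b)
    rw [← Submodule.Quotient.mk_add, qStar_mk, qStar_mk, qStar_mk, star_add,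
      Submodule.Quotient.mk_add]

@[simp] lemma qspace_star_mk (a : coh S φ) :
    star (Submodule.Quotient.mk a : Qspace S φ) = Submodule.Quotient.mk (star a) := rfl

instance qspaceSMod : StarModule ℂ (Qspace S φ) where
  star_smul := fun c x => Quotient.inductionOn' x fun a => by
    rw [Submodule.Quotient.mk''_eq_mk, ← Submodule.Quotient.mk_smul, qspace_star_mk,
      qspace_star_mk, star_smul, Submodule.Quotient.mk_smul]

/-- The connecting maps `φ_{k,l} : S_k → S_l` of an inductive sequence. -/
def towerFun (k l : ℕ) (h : k ≤ l) (x : (S k).V) : (S l).V :=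
  Nat.leRecOn h (fun {m} y => (φ m).toLin y) x

/-- The sequence `\hat x` associated to `x ∈ S_k`: it is `0` before position `k`,
`x` at position `k` and `φ_{k,l}(x)` afterwards. -/
def hatSeq (k : ℕ) (x : (S k).V) : ∀ l, (S l).V := fun l =>
  if h : k ≤ l then towerFun S φ k l h x else 0

lemma hatSeq_mem (k : ℕ) (x : (S k).V) : hatSeq S φ k x ∈ coh S φ := by
  refine ⟨k, fun l hl => ?_⟩
  show hatSeq S φ k x (l + 1) = _
  rw [hatSeq, hatSeq, dif_pos hl, dif_pos (le_trans hl (Nat.le_succ l))]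
  exact Nat.leRecOn_succ (C := fun m => (S m).V) (next := fun {m} y => (φ m).toLin y) hl x

/-- The canonical map `φ^{(k)} : S_k → S'/K` into the inductive limit. -/
def limCan (k : ℕ) (x : (S k).V) : Qspace S φ :=
  Submodule.Quotient.mk ⟨hatSeq S φ k x, hatSeq_mem S φ k x⟩

/-- The set `D_n` of hermitian matrices over `S'` which are eventually coherent and
eventually positive. -/
def preD (n : ℕ) : Set (Matrix (Fin n) (Fin n) (coh S φ)) :=
  {A | star A = A ∧ ∃ k0, ∀ k, k0 ≤ k →
    (∀ i j, (A i j).1 (k + 1) = (φ k).toLin ((A i j).1 k)) ∧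
    (Matrix.of fun i j => (A i j).1 k) ∈ (S k).pos n}

/-- The matrix cones `M_n(S'/K)^+ = q_n(D_n)` on the quotient (before
Archimedeanization). -/
def quotPos (n : ℕ) : Set (Matrix (Fin n) (Fin n) (Qspace S φ)) :=
  {U | star U = U ∧ ∃ A ∈ preD S φ n,
    ∀ i j, (Submodule.Quotient.mk (A i j) : Qspace S φ) = U i j}

/-- The order unit of the inductive limit: the class of the sequence `(1_{S_k})_k`. -/
def limOne : Qspace S φ :=
  Submodule.Quotient.mk ⟨fun k => (S k).one, ⟨0, fun k _ => ((φ k).map_one).symm⟩⟩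

/-- The matrix cones of the inductive limit: the Archimedeanization of the cones
`q_n(D_n)` of the quotient `S'/K`. -/
def limPos (n : ℕ) : Set (Matrix (Fin n) (Fin n) (Qspace S φ)) :=
  {U | star U = U ∧ ∀ ε : ℝ, 0 < ε →
    (ε : ℂ) • unitMat (limOne S φ) n + U ∈ quotPos S φ n}

/-- The inductive limit of an inductive sequence of operator systems: the
Archimedeanization of the quotient `S'/K` with cones `q_n(D_n)` and order
unit `(1_{S_k}) + K`. -/
def indLim : PreOS where
  V := Qspace S φ
  pos := limPos S φ
  one := limOne S φ

/-- `L` (an operator-system datum) "is the inductive limit" of the inductive sequence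
`{S_k, φ_k}` along the compatible family `c_k : S_k → L`: the canonical map `Ψ`
from the constructed inductive limit to `L` induced by the `c_k` is a unital complete
order isomorphism. -/
def IsIndLimitOf (L : PreOS) (c : ∀ k, (S k).V → L.V) : Prop :=
  ∃ Ψ : (indLim S φ).V →ₗ[ℂ] L.V,
    (∀ k x, Ψ (limCan S φ k x) = c k x) ∧
    Function.Bijective Ψ ∧
    Ψ (indLim S φ).one = L.one ∧
    (∀ n (U : Matrix (Fin n) (Fin n) (indLim S φ).V),
      U ∈ (indLim S φ).pos n ↔ U.map Ψ ∈ L.pos n)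


attribute [-instance] TensorProduct.instStar TensorProduct.instInvolutiveStar
  TensorProduct.instStarAddMonoid TensorProduct.instStarModule

/-! ## Star structure on algebraic tensor products -/

section TensorStar

variable {V W : Type} [AddCommGroup V] [Module ℂ V] [StarAddMonoid V] [StarModule ℂ V]
  [AddCommGroup W] [Module ℂ W] [StarAddMonoid W] [StarModule ℂ W]

/-- The bi-additive map `(v, w) ↦ v* ⊗ w*`. -/
def starBil : V →+ W →+ TensorProduct ℂ V W where
  toFun v :=
    { toFun := fun w => star v ⊗ₜ[ℂ] star w
      map_zero' := by
        show star v ⊗ₜ[ℂ] star (0 : W) = 0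
        rw [star_zero, TensorProduct.tmul_zero]
      map_add' := fun a b => by
        show star v ⊗ₜ[ℂ] star (a + b) = star v ⊗ₜ[ℂ] star a + star v ⊗ₜ[ℂ] star b
        rw [star_add, TensorProduct.tmul_add] }
  map_zero' := AddMonoidHom.ext fun w => by
    show star (0 : V) ⊗ₜ[ℂ] star w = 0
    rw [star_zero, TensorProduct.zero_tmul]
  map_add' := fun v₁ v₂ => AddMonoidHom.ext fun w => by
    show star (v₁ + v₂) ⊗ₜ[ℂ] star w = star v₁ ⊗ₜ[ℂ] star w + star v₂ ⊗ₜ[ℂ] star w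
    rw [star_add, TensorProduct.add_tmul]

/-- The star operation on `V ⊗ W`, determined by `(v ⊗ w)* = v* ⊗ w*`. -/
def tensorStarHom : TensorProduct ℂ V W →+ TensorProduct ℂ V W :=
  TensorProduct.liftAddHom starBil (fun c v w => by
    show star (c • v) ⊗ₜ[ℂ] star w = star v ⊗ₜ[ℂ] star (c • w)
    rw [star_smul, star_smul, TensorProduct.smul_tmul])

lemma tensorStarHom_tmul (v : V) (w : W) :
    tensorStarHom (v ⊗ₜ[ℂ] w) = star v ⊗ₜ[ℂ] star w :=
  TensorProduct.liftAddHom_tmul _ _ _ _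

lemma tensorStarHom_inv (x : TensorProduct ℂ V W) :
    tensorStarHom (tensorStarHom x) = x := by
  induction x using TensorProduct.induction_on with
  | zero => rw [map_zero, map_zero]
  | tmul v w => rw [tensorStarHom_tmul, tensorStarHom_tmul, star_star, star_star]
  | add a b ha hb => rw [map_add, map_add, ha, hb]

lemma tensorStarHom_smul (c : ℂ) (x : TensorProduct ℂ V W) :
    tensorStarHom (c • x) = star c • tensorStarHom x := by
  induction x using TensorProduct.induction_on with
  | zero => rw [smul_zero, map_zero, smul_zero]
  | tmul v w =>
    rw [TensorProduct.smul_tmul', tensorStarHom_tmul, tensorStarHom_tmul, star_smul,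
      ← TensorProduct.smul_tmul']
  | add a b ha hb => rw [smul_add, map_add, map_add, ha, hb, smul_add]

noncomputable instance tensorSAM : StarAddMonoid (TensorProduct ℂ V W) where
  star := tensorStarHom
  star_involutive := tensorStarHom_inv
  star_add := fun a b => map_add tensorStarHom a b

@[simp] lemma tstar_tmul (v : V) (w : W) :
    star (v ⊗ₜ[ℂ] w) = star v ⊗ₜ[ℂ] star w :=
  tensorStarHom_tmul v w

noncomputable instance tensorSMod : StarModule ℂ (TensorProduct ℂ V W) where
  star_smul := tensorStarHom_smul

end TensorStar

/-! ## Operator system structures on tensor products -/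

/-- The data of an operator system structure (a family of matrix cones) on the
algebraic tensor product of two matrix ordered spaces. -/
def KPCones (P Q : PreOS) :=
  ∀ n : ℕ, Set (Matrix (Fin n) (Fin n) (TensorProduct ℂ P.V Q.V))

/-- The algebraic tensor product of two matrix ordered `*`-vector spaces, equipped
with a given family of matrix cones `τ` and unit `1 ⊗ 1`. -/
def tensorPre (P Q : PreOS) (τ : KPCones P Q) : PreOS where
  V := TensorProduct ℂ P.V Q.V
  pos := τ
  one := P.one ⊗ₜ[ℂ] Q.one

lemma map_tensor_star {P P' Q Q' : PreOS} (f : LinSU P P') (g : LinSU Q Q')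
    (u : TensorProduct ℂ P.V Q.V) :
    TensorProduct.map f.toLin g.toLin (star u)
      = star (TensorProduct.map f.toLin g.toLin u) := by
  induction u using TensorProduct.induction_on with
  | zero => rw [star_zero, map_zero, star_zero]
  | tmul v w =>
    rw [tstar_tmul, TensorProduct.map_tmul, TensorProduct.map_tmul, f.map_star, g.map_star,
      ← tstar_tmul]
  | add a b ha hb => rw [star_add, map_add, map_add, ha, hb, star_add]

/-- The tensor product `f ⊗ g` of unital self-adjoint maps, as a unital self-adjoint
map between tensor products carrying given operator system structures. -/
def tensorMapLinSU {P P' Q Q' : PreOS} (f : LinSU P P') (g : LinSU Q Q')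
    (τ : KPCones P Q) (τ' : KPCones P' Q') :
    LinSU (tensorPre P Q τ) (tensorPre P' Q' τ') where
  toLin := TensorProduct.map f.toLin g.toLin
  map_star := fun u => map_tensor_star f g u
  map_one := by
    show TensorProduct.map f.toLin g.toLin (P.one ⊗ₜ[ℂ] Q.one) = P'.one ⊗ₜ[ℂ] Q'.one
    rw [TensorProduct.map_tmul, f.map_one, g.map_one]

/-! ### Matrix algebras as operator systems -/

/-- Flattening of a matrix of matrices into a big matrix. -/
def flattenMat {n : ℕ} {ι : Type} (A : Matrix (Fin n) (Fin n) (Matrix ι ι ℂ)) :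
    Matrix (Fin n × ι) (Fin n × ι) ℂ :=
  Matrix.of fun p q => A p.1 q.1 p.2 q.2

/-- The matrix algebra `M_d(ℂ)` as an operator system: a matrix of matrices is
positive iff the corresponding big scalar matrix is positive semidefinite. -/
def MatOS (d : ℕ) : PreOS where
  V := Matrix (Fin d) (Fin d) ℂ
  pos := fun n => {A | (flattenMat A).PosSemidef}
  one := 1

/-- The Kronecker-product bilinear map on complex matrices. -/
def kronLin (k m : ℕ) : Matrix (Fin k) (Fin k) ℂ →ₗ[ℂ] Matrix (Fin m) (Fin m) ℂ →ₗ[ℂ]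
    Matrix (Fin k × Fin m) (Fin k × Fin m) ℂ :=
  Matrix.kroneckerMapBilinear (LinearMap.mul ℂ ℂ)

/-- The map `φ ⊗ ψ : S ⊗ T → M_k ⊗ M_m ≅ M_{km}` associated to a pair of maps into
matrix algebras. -/
def pairMap {P Q : PreOS} {k m : ℕ} (f : P.V →ₗ[ℂ] Matrix (Fin k) (Fin k) ℂ)
    (g : Q.V →ₗ[ℂ] Matrix (Fin m) (Fin m) ℂ) :
    TensorProduct ℂ P.V Q.V →ₗ[ℂ] Matrix (Fin k × Fin m) (Fin k × Fin m) ℂ :=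
  (TensorProduct.lift (kronLin k m)).comp (TensorProduct.map f g)

/-! ### The min structure -/

/-- The minimal operator system structure on `S ⊗ T`: a matrix is positive iff all
amplifications `(φ ⊗ ψ)_n` by ucp maps into matrix algebras send it to positive
semidefinite matrices. -/
def minPos (P Q : PreOS) : KPCones P Q := fun n =>
  {u | ∀ (k m : ℕ) (f : UCPmap P (MatOS k)) (g : UCPmap Q (MatOS m)),
    (flattenMat (u.map (pairMap f.toLin g.toLin))).PosSemidef}

/-- The minimal tensor product of operator systems. -/
def minTen (P Q : PreOS) : PreOS := tensorPre P Q (minPos P Q)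

/-! ### The max structure -/

/-- The matrix `P ⊗ Q` over `S ⊗ T` associated to matrices `P` over `S` and `Q` over `T`. -/
def tensMat {P Q : PreOS} {l m : ℕ} (Pm : Matrix (Fin l) (Fin l) P.V)
    (Qm : Matrix (Fin m) (Fin m) Q.V) :
    Matrix (Fin l × Fin m) (Fin l × Fin m) (TensorProduct ℂ P.V Q.V) :=
  Matrix.of fun p q => Pm p.1 q.1 ⊗ₜ[ℂ] Qm p.2 q.2

/-- The cone `D_n^{max} = {α (P ⊗ Q) α* }`. -/
def Dmax (P Q : PreOS) (n : ℕ) : Set (Matrix (Fin n) (Fin n) (TensorProduct ℂ P.V Q.V)) :=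
  {u | ∃ (l m : ℕ) (Pm : Matrix (Fin l) (Fin l) P.V) (Qm : Matrix (Fin m) (Fin m) Q.V)
    (a : Matrix (Fin n) (Fin l × Fin m) ℂ),
    Pm ∈ P.pos l ∧ Qm ∈ Q.pos m ∧ u = matCong a (tensMat Pm Qm)}

/-- The maximal operator system structure on `S ⊗ T`: the Archimedeanization of the
cones `D_n^{max}`. -/
def maxPos (P Q : PreOS) : KPCones P Q := fun n =>
  {u | star u = u ∧ ∀ ε : ℝ, 0 < ε →
    (ε : ℂ) • unitMat (P.one ⊗ₜ[ℂ] Q.one) n + u ∈ Dmax P Q n}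

/-- The maximal tensor product of operator systems. -/
def maxTen (P Q : PreOS) : PreOS := tensorPre P Q (maxPos P Q)

/-! ### The commuting (c) structure -/

/-- A bundled complex Hilbert space. -/
structure HilbertC : Type 1 where
  H : Type
  [nacg : NormedAddCommGroup H]
  [ips : InnerProductSpace ℂ H]
  [cs : CompleteSpace H]

attribute [instance] HilbertC.nacg HilbertC.ips HilbertC.cs

/-- `B(H)` as an operator system: a matrix of operators is positive iff the induced
operator on `H^n` is positive. -/
def BH (h : HilbertC) : PreOS where
  V := h.H →L[ℂ] h.H
  pos := fun n => {A | ∀ ξ : Fin n → h.H,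
    0 ≤ ∑ i, ∑ j, (inner ℂ (ξ i) ((A i j) (ξ j)) : ℂ)}
  one := 1

/-- The map `S ⊗ T → B(H)`, `x ⊗ y ↦ φ(x)ψ(y)`, associated to a pair of maps into a
common `B(H)`. -/
def mulMap {P Q : PreOS} (h : HilbertC) (f : P.V →ₗ[ℂ] (h.H →L[ℂ] h.H))
    (g : Q.V →ₗ[ℂ] (h.H →L[ℂ] h.H)) :
    TensorProduct ℂ P.V Q.V →ₗ[ℂ] (h.H →L[ℂ] h.H) :=
  TensorProduct.lift (((LinearMap.mul ℂ (h.H →L[ℂ] h.H)).comp f).compl₂ g)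

/-- The commuting operator system structure on `S ⊗ T`: positivity is tested against
all pairs of ucp maps into a common `B(H)` with commuting ranges. -/
def cPos (P Q : PreOS) : KPCones P Q := fun n =>
  {u | ∀ (h : HilbertC) (f : UCPmap P (BH h)) (g : UCPmap Q (BH h)),
    (∀ x y, (show h.H →L[ℂ] h.H from f.toLin x) * (show h.H →L[ℂ] h.H from g.toLin y)
      = (show h.H →L[ℂ] h.H from g.toLin y) * (show h.H →L[ℂ] h.H from f.toLin x)) →
    u.map (mulMap h f.toLin g.toLin) ∈ (BH h).pos n}

/-- The commuting tensor product of operator systems. -/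
def cTen (P Q : PreOS) : PreOS := tensorPre P Q (cPos P Q)

/-! ### Injectivity, injective envelopes, and the e/el/er structures -/

/-- An operator system `I` is injective if ucp maps into `I` extend along unital
complete order monomorphisms. -/
def InjectiveOS (I : PreOS) : Prop :=
  ∀ (A B : PreOS), A.IsOpSys → B.IsOpSys → ∀ (j : UCPmap A B), IsCOMono j →
    ∀ f : UCPmap A I, ∃ g : UCPmap B I, ∀ x, g.toLin (j.toLin x) = f.toLin x

/-- `ι : P → I` realizes `I` as an injective envelope of `P`. -/
structure IsInjEnv (P I : PreOS) (ι : UCPmap P I) : Prop where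
  os : I.IsOpSys
  mono : IsCOMono ι
  injective : InjectiveOS I
  rigid : ∀ g : UCPmap I I, (∀ x, g.toLin (ι.toLin x) = ι.toLin x) → ∀ y, g.toLin y = y

/-- `τ` is the `el` operator system structure on `P ⊗ Q`, i.e. the structure induced
by the inclusion `P ⊗ Q ⊆ I(P) ⊗_max Q`. -/
def IsElCones (P Q : PreOS) (τ : KPCones P Q) : Prop :=
  ∃ (I : PreOS) (ι : UCPmap P I), IsInjEnv P I ι ∧
    ∀ n u, u ∈ τ n ↔
      u.map (TensorProduct.map ι.toLin (LinearMap.id : Q.V →ₗ[ℂ] Q.V)) ∈ maxPos I Q n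

/-- `τ` is the `er` operator system structure on `P ⊗ Q`, i.e. the structure induced
by the inclusion `P ⊗ Q ⊆ P ⊗_max I(Q)`. -/
def IsErCones (P Q : PreOS) (τ : KPCones P Q) : Prop :=
  ∃ (I : PreOS) (ι : UCPmap Q I), IsInjEnv Q I ι ∧
    ∀ n u, u ∈ τ n ↔
      u.map (TensorProduct.map (LinearMap.id : P.V →ₗ[ℂ] P.V) ι.toLin) ∈ maxPos P I n

/-- `τ` is the `e` operator system structure on `P ⊗ Q`, i.e. the structure induced
by the inclusion `P ⊗ Q ⊆ I(P) ⊗_max I(Q)`. -/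
def IsECones (P Q : PreOS) (τ : KPCones P Q) : Prop :=
  ∃ (I : PreOS) (ιP : UCPmap P I) (J : PreOS) (ιQ : UCPmap Q J),
    IsInjEnv P I ιP ∧ IsInjEnv Q J ιQ ∧
    ∀ n u, u ∈ τ n ↔
      u.map (TensorProduct.map ιP.toLin ιQ.toLin) ∈ maxPos I J n

/-! ### The six Kavruk–Paulsen structures and nuclearity -/

/-- Labels for the six operator system tensor product structures. -/
inductive KPLabel
  | min | e | el | er | c | max
deriving DecidableEq

/-- `IsKPCones a P Q τ`: `τ` is the operator system structure on `P ⊗ Q` named by the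
label `a`. -/
def IsKPCones : KPLabel → ∀ (P Q : PreOS), KPCones P Q → Prop
  | .min => fun P Q τ => τ = minPos P Q
  | .e => IsECones
  | .el => IsElCones
  | .er => IsErCones
  | .c => fun P Q τ => τ = cPos P Q
  | .max => fun P Q τ => τ = maxPos P Q

/-- The partial order `min ≤ e ≤ el, er ≤ c ≤ max` on the six structures. -/
def KPLabel.le : KPLabel → KPLabel → Prop
  | .min, _ => True
  | _, .max => True
  | .e, .min => False
  | .e, _ => True
  | .el, .el => True
  | .el, .c => True
  | .el, _ => False
  | .er, .er => True
  | .er, .c => True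
  | .er, _ => False
  | .c, .c => True
  | .c, _ => False
  | .max, _ => False

/-- `(a, b)`-nuclearity of an operator system `P`: for every operator system `Q`, the
`a`- and the `b`-structure on `P ⊗ Q` coincide. -/
def IsNuclear (a b : KPLabel) (P : PreOS) : Prop :=
  ∀ (Q : PreOS), Q.IsOpSys → ∀ (τa τb : KPCones P Q),
    IsKPCones a P Q τa → IsKPCones b P Q τb → τa = τb

/-! ## Auxiliary lemmas for Statement 7 -/

section AuxMat

variable {V W : Type} [AddCommGroup V] [Module ℂ V] [AddCommGroup W] [Module ℂ W]

lemma matCong_apply {ι κ : Type} [Fintype κ] (a : Matrix ι κ ℂ) (A : Matrix κ κ V) (i j : ι) :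
    matCong a A i j = ∑ s, ∑ t, (a i s * star (a j t)) • A s t := rfl

lemma matCong_map {ι κ : Type} [Fintype κ] (a : Matrix ι κ ℂ) (A : Matrix κ κ V)
    (f : V →ₗ[ℂ] W) : (matCong a A).map f = matCong a (A.map f) := by
  ext i j
  simp [matCong, Matrix.map_apply, map_sum, map_smul]

lemma matCong_add {ι κ : Type} [Fintype κ] (a : Matrix ι κ ℂ) (A B : Matrix κ κ V) :
    matCong a (A + B) = matCong a A + matCong a B := by
  ext i j
  simp [matCong, smul_add, Finset.sum_add_distrib]

lemma matCong_smul {ι κ : Type} [Fintype κ] (a : Matrix ι κ ℂ) (c : ℂ) (A : Matrix κ κ V) :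
    matCong a (c • A) = c • matCong a A := by
  ext i j
  simp [matCong, Finset.smul_sum, smul_comm c]

lemma mmap_add {ι : Type} (f : V →ₗ[ℂ] W) (A B : Matrix ι ι V) :
    (A + B).map f = A.map f + B.map f := by
  ext i j; simp [Matrix.map_apply]

lemma mmap_smul {ι : Type} (f : V →ₗ[ℂ] W) (c : ℂ) (A : Matrix ι ι V) :
    (c • A).map f = c • A.map f := by
  ext i j; simp [Matrix.map_apply]

lemma mmap_neg {ι : Type} (f : V →ₗ[ℂ] W) (A : Matrix ι ι V) :
    (-A).map f = -(A.map f) := by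
  ext i j; simp [Matrix.map_apply]

lemma mmap_inj {ι : Type} {f : V →ₗ[ℂ] W} (hf : Function.Injective f)
    {A B : Matrix ι ι V} (h : A.map f = B.map f) : A = B := by
  ext i j
  exact hf (congrFun (congrFun h i) j)

lemma unitMat_map {n : ℕ} (f : V →ₗ[ℂ] W) (e : V) :
    (unitMat e n).map f = unitMat (f e) n := by
  ext i j
  by_cases h : i = j <;> simp [unitMat, h]

lemma map_smul_unit_add {n : ℕ} (f : V →ₗ[ℂ] W) (c : ℂ) (e : V)
    (U : Matrix (Fin n) (Fin n) V) :
    (c • unitMat e n + U).map f = c • unitMat (f e) n + U.map f := by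
  rw [mmap_add, mmap_smul, unitMat_map]

variable [StarAddMonoid V] [StarModule ℂ V]

lemma star_matCong {ι κ : Type} [Fintype κ] (a : Matrix ι κ ℂ) (A : Matrix κ κ V) :
    star (matCong a A) = matCong a (star A) := by
  ext i j
  rw [Matrix.star_apply]
  simp only [matCong_apply, star_sum, star_smul, star_mul', star_star]
  rw [Finset.sum_comm]
  refine Finset.sum_congr rfl fun s _ => Finset.sum_congr rfl fun t _ => ?_
  rw [Matrix.star_apply, mul_comm]

lemma star_unitMat {n : ℕ} (e : V) (he : star e = e) :
    star (unitMat e n) = unitMat e n := by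
  ext i j
  by_cases h : i = j
  · subst h; simp [Matrix.star_apply, unitMat, he]
  · simp [Matrix.star_apply, unitMat, h, Ne.symm h]

lemma star_smul_real {n : ℕ} (c : ℝ) (A : Matrix (Fin n) (Fin n) V) :
    star ((c : ℂ) • A) = (c : ℂ) • star A := by
  rw [star_smul]
  congr 1
  simp [Complex.star_def]

lemma star_map_comm {ι : Type} [StarAddMonoid W] (f : V →ₗ[ℂ] W)
    (hf : ∀ x, f (star x) = star (f x)) (A : Matrix ι ι V) :
    star (A.map f) = (star A).map f := by
  ext i j
  simp [Matrix.star_apply, Matrix.map_apply, hf]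

lemma matCong_reindex {ι κ κ' : Type} [Fintype κ] [Fintype κ'] (e : κ' ≃ κ)
    (a : Matrix ι κ ℂ) (A : Matrix κ κ V) :
    matCong a A
      = matCong (Matrix.of fun i k' => a i (e k')) (Matrix.of fun s t => A (e s) (e t)) := by
  ext i j
  rw [matCong_apply, matCong_apply]
  rw [← Equiv.sum_comp e (fun s => ∑ t, (a i s * star (a j t)) • A s t)]
  refine Finset.sum_congr rfl fun s _ => ?_
  rw [← Equiv.sum_comp e (fun t => (a i (e s) * star (a j t)) • A (e s) t)]
  rfl

lemma matCong_embed_apply {κ ι : Type} [Fintype κ] [DecidableEq ι] [DecidableEq κ]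
    (f : κ → ι) (hf : Function.Injective f) (A : Matrix κ κ V) (x y : κ) :
    matCong (Matrix.of fun s (t : κ) => if s = f t then (1 : ℂ) else 0) A (f x) (f y)
      = A x y := by
  rw [matCong_apply]
  simp only [Matrix.of_apply, hf.eq_iff]
  simp [apply_ite (star : ℂ → ℂ), ite_mul, mul_ite, ite_smul, Finset.sum_ite_eq]

lemma matCong_embed_apply_zero {κ ι : Type} [Fintype κ] [DecidableEq ι]
    (f : κ → ι) (A : Matrix κ κ V) (i j : ι)
    (h : (∀ x, i ≠ f x) ∨ (∀ y, j ≠ f y)) :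
    matCong (Matrix.of fun s (t : κ) => if s = f t then (1 : ℂ) else 0) A i j = 0 := by
  rw [matCong_apply]
  refine Finset.sum_eq_zero fun s _ => Finset.sum_eq_zero fun t _ => ?_
  rcases h with h | h
  · simp [Matrix.of_apply, if_neg (h s)]
  · simp [Matrix.of_apply, if_neg (h t)]

end AuxMat

section AuxPre

lemma blockDiag_pos {P : PreOS} (hP : P.IsOpSys) {l1 l2 : ℕ}
    {P1 : Matrix (Fin l1) (Fin l1) P.V} {P2 : Matrix (Fin l2) (Fin l2) P.V}
    (h1 : P1 ∈ P.pos l1) (h2 : P2 ∈ P.pos l2) :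
    (Matrix.of fun s s' =>
        Matrix.fromBlocks P1 0 0 P2 (finSumFinEquiv.symm s) (finSumFinEquiv.symm s'))
      ∈ P.pos (l1 + l2) := by
  have hinl : Function.Injective
      (fun x : Fin l1 => finSumFinEquiv (Sum.inl x : Fin l1 ⊕ Fin l2)) :=
    fun a b hab => by simpa using finSumFinEquiv.injective hab
  have hinr : Function.Injective
      (fun x : Fin l2 => finSumFinEquiv (Sum.inr x : Fin l1 ⊕ Fin l2)) :=
    fun a b hab => by simpa using finSumFinEquiv.injective hab
  have key : (Matrix.of fun s s' =>
        Matrix.fromBlocks P1 0 0 P2 (finSumFinEquiv.symm s) (finSumFinEquiv.symm s'))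
      = matCong (Matrix.of fun s t =>
          if s = (fun x : Fin l1 => finSumFinEquiv (Sum.inl x : Fin l1 ⊕ Fin l2)) t
          then (1 : ℂ) else 0) P1
        + matCong (Matrix.of fun s t =>
          if s = (fun x : Fin l2 => finSumFinEquiv (Sum.inr x : Fin l1 ⊕ Fin l2)) t
          then (1 : ℂ) else 0) P2 := by
    ext s s'
    obtain ⟨p, rfl⟩ : ∃ p, s = finSumFinEquiv p := ⟨_, (finSumFinEquiv.apply_symm_apply s).symm⟩
    obtain ⟨q, rfl⟩ : ∃ q, s' = finSumFinEquiv q := ⟨_, (finSumFinEquiv.apply_symm_apply s').symm⟩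
    have hne1 : ∀ (x : Fin l1) (y : Fin l2),
        finSumFinEquiv (Sum.inl x : Fin l1 ⊕ Fin l2) ≠ finSumFinEquiv (Sum.inr y) := by
      intro x y h; simpa using finSumFinEquiv.injective h
    rw [Matrix.add_apply, Matrix.of_apply, Equiv.symm_apply_apply, Equiv.symm_apply_apply]
    cases p with
    | inl x =>
      cases q with
      | inl y =>
        rw [matCong_embed_apply _ hinl,
          matCong_embed_apply_zero _ _ _ _ (Or.inl fun t => hne1 x t),
          Matrix.fromBlocks_apply₁₁, add_zero]
      | inr y =>
        rw [matCong_embed_apply_zero _ _ _ _ (Or.inr fun t => (hne1 t y).symm),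
          matCong_embed_apply_zero _ _ _ _ (Or.inl fun t => hne1 x t),
          Matrix.fromBlocks_apply₁₂, add_zero, Matrix.zero_apply]
    | inr x =>
      cases q with
      | inl y =>
        rw [matCong_embed_apply_zero _ _ _ _ (Or.inl fun t => (hne1 t x).symm),
          matCong_embed_apply_zero _ _ _ _ (Or.inr fun t => hne1 y t),
          Matrix.fromBlocks_apply₂₁, add_zero, Matrix.zero_apply]
      | inr y =>
        rw [matCong_embed_apply_zero _ _ _ _ (Or.inl fun t => (hne1 t x).symm),
          matCong_embed_apply _ hinr,
          Matrix.fromBlocks_apply₂₂, zero_add]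
  rw [key]
  exact hP.add_mem _ _ (hP.cong_mem _ _ _ _ h1) _ (hP.cong_mem _ _ _ _ h2)

lemma tensMat_map {P Q P' Q' : PreOS} (f : P.V →ₗ[ℂ] P'.V) (g : Q.V →ₗ[ℂ] Q'.V)
    {l m : ℕ} (Pm : Matrix (Fin l) (Fin l) P.V) (Qm : Matrix (Fin m) (Fin m) Q.V) :
    (tensMat Pm Qm).map (TensorProduct.map f g) = tensMat (Pm.map f) (Qm.map g) := by
  ext p q
  simp [tensMat, Matrix.map_apply]

lemma mmap_id {P : PreOS} {l : ℕ} (A : Matrix (Fin l) (Fin l) P.V) :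
    A.map (LinearMap.id : P.V →ₗ[ℂ] P.V) = A := by
  ext i j; simp [Matrix.map_apply]

lemma Dmax_map {P P' Q : PreOS} (f : P.V →ₗ[ℂ] P'.V)
    (hf : ∀ l (Pm : Matrix (Fin l) (Fin l) P.V), Pm ∈ P.pos l → Pm.map f ∈ P'.pos l)
    {n : ℕ} {u : Matrix (Fin n) (Fin n) (TensorProduct ℂ P.V Q.V)}
    (hu : u ∈ Dmax P Q n) :
    u.map (TensorProduct.map f (LinearMap.id : Q.V →ₗ[ℂ] Q.V)) ∈ Dmax P' Q n := by
  obtain ⟨l, m, Pm, Qm, a, hP, hQ, rfl⟩ := hu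
  refine ⟨l, m, Pm.map f, Qm, a, hf l Pm hP, hQ, ?_⟩
  rw [matCong_map, tensMat_map, mmap_id (P := Q)]

lemma Dmax_smul {P Q : PreOS} (hP : P.IsOpSys) {n : ℕ}
    {u : Matrix (Fin n) (Fin n) (TensorProduct ℂ P.V Q.V)}
    (hu : u ∈ Dmax P Q n) (c : ℝ) (hc : 0 ≤ c) : (c : ℂ) • u ∈ Dmax P Q n := by
  obtain ⟨l, m, Pm, Qm, a, hPm, hQm, rfl⟩ := hu
  refine ⟨l, m, (c : ℂ) • Pm, Qm, a, hP.smul_mem l Pm hPm c hc, hQm, ?_⟩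
  rw [← matCong_smul]
  congr 1

lemma unit_mem_Dmax (P Q : PreOS) (hP : P.IsOpSys) (hQ : Q.IsOpSys) (n : ℕ) :
    unitMat (P.one ⊗ₜ[ℂ] Q.one) n ∈ Dmax P Q n := by
  refine ⟨n, 1, unitMat P.one n, unitMat Q.one 1,
    Matrix.of fun i p => if i = p.1 then 1 else 0, hP.one_mem n, hQ.one_mem 1, ?_⟩
  ext i j
  rw [matCong_apply]
  simp only [Matrix.of_apply, Fintype.sum_prod_type, Fin.sum_univ_one, tensMat, unitMat]
  simp only [apply_ite (star : ℂ → ℂ), star_one, star_zero, ite_mul, mul_ite, mul_one,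
    mul_zero, zero_mul, one_mul, ite_smul, zero_smul, Finset.sum_ite_eq, Finset.mem_univ,
    if_true, one_smul]
  by_cases h : i = j <;> simp [h, TensorProduct.zero_tmul]

lemma Dmax_add {P Q : PreOS} (hP : P.IsOpSys) (hQ : Q.IsOpSys) {n : ℕ}
    {u v : Matrix (Fin n) (Fin n) (TensorProduct ℂ P.V Q.V)}
    (hu : u ∈ Dmax P Q n) (hv : v ∈ Dmax P Q n) : u + v ∈ Dmax P Q n := by
  obtain ⟨l1, m1, P1, Q1, a1, hP1, hQ1, rfl⟩ := hu
  obtain ⟨l2, m2, P2, Q2, a2, hP2, hQ2, rfl⟩ := hv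
  set eL : Fin l1 ⊕ Fin l2 ≃ Fin (l1 + l2) := finSumFinEquiv
  set eM : Fin m1 ⊕ Fin m2 ≃ Fin (m1 + m2) := finSumFinEquiv
  set P' : Matrix (Fin (l1 + l2)) (Fin (l1 + l2)) P.V :=
    Matrix.of fun s s' => Matrix.fromBlocks P1 0 0 P2 (eL.symm s) (eL.symm s') with hP'
  set Q' : Matrix (Fin (m1 + m2)) (Fin (m1 + m2)) Q.V :=
    Matrix.of fun t t' => Matrix.fromBlocks Q1 0 0 Q2 (eM.symm t) (eM.symm t') with hQ'
  set aS : Matrix (Fin n) ((Fin l1 ⊕ Fin l2) × (Fin m1 ⊕ Fin m2)) ℂ :=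
    Matrix.of fun i p =>
      Sum.elim (fun x => Sum.elim (fun y => a1 i (x, y)) (fun _ => 0) p.2)
        (fun x => Sum.elim (fun _ => 0) (fun y => a2 i (x, y)) p.2) p.1 with haS
  set a' : Matrix (Fin n) (Fin (l1 + l2) × Fin (m1 + m2)) ℂ :=
    Matrix.of fun i p => aS i (eL.symm p.1, eM.symm p.2) with ha'
  refine ⟨l1 + l2, m1 + m2, P', Q', a', blockDiag_pos hP hP1 hP2, blockDiag_pos hQ hQ1 hQ2, ?_⟩
  rw [matCong_reindex (eL.prodCongr eM)]
  have e1 : (Matrix.of fun i k' => a' i ((eL.prodCongr eM) k')) = aS := by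
    ext i p
    simp [ha', Equiv.prodCongr_apply]
  have e2 : (Matrix.of fun s t => tensMat P' Q' ((eL.prodCongr eM) s) ((eL.prodCongr eM) t))
      = Matrix.of fun s t =>
          (Matrix.fromBlocks P1 0 0 P2 s.1 t.1) ⊗ₜ[ℂ] (Matrix.fromBlocks Q1 0 0 Q2 s.2 t.2) := by
    ext s t
    simp [tensMat, hP', hQ', Equiv.prodCongr_apply]
  rw [e1, e2]
  ext i j
  rw [Matrix.add_apply, matCong_apply, matCong_apply, matCong_apply]
  simp only [Matrix.of_apply, Fintype.sum_prod_type, Fintype.sum_sum_type, haS,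
    Sum.elim_inl, Sum.elim_inr, Matrix.fromBlocks_apply₁₁, Matrix.fromBlocks_apply₁₂,
    Matrix.fromBlocks_apply₂₁, Matrix.fromBlocks_apply₂₂, Matrix.zero_apply,
    TensorProduct.zero_tmul, TensorProduct.tmul_zero, smul_zero, star_zero,
    zero_mul, mul_zero, zero_smul, Finset.sum_const_zero, add_zero, zero_add,
    tensMat]

lemma Dmax_unit_add {P Q : PreOS} (hP : P.IsOpSys) (hQ : Q.IsOpSys) {n : ℕ}
    {u : Matrix (Fin n) (Fin n) (TensorProduct ℂ P.V Q.V)}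
    (hu : u ∈ Dmax P Q n) (c : ℝ) (hc : 0 ≤ c) :
    (c : ℂ) • unitMat (P.one ⊗ₜ[ℂ] Q.one) n + u ∈ Dmax P Q n :=
  Dmax_add hP hQ (Dmax_smul hP (unit_mem_Dmax P Q hP hQ n) c hc) hu

lemma mmap_zero {V W : Type} [AddCommGroup V] [Module ℂ V] [AddCommGroup W] [Module ℂ W]
    {ι : Type} (f : V →ₗ[ℂ] W) :
    (0 : Matrix ι ι V).map f = 0 := by
  ext i j; simp [Matrix.map_apply]

lemma SubOS_isOpSys (S : PreOS) (hS : S.IsOpSys) (W : StarSubmodule S) :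
    (SubOS S W).IsOpSys := by
  have hinj : Function.Injective ((subVal S W).toLin) := Subtype.val_injective
  have hmem : ∀ n (A : Matrix (Fin n) (Fin n) (SubOS S W).V),
      A ∈ (SubOS S W).pos n ↔ A.map (subVal S W).toLin ∈ S.pos n := fun n A => Iff.rfl
  refine ⟨?_, ?_, ?_, ?_, ?_, ?_, ?_, ?_, ?_⟩
  · intro n A hA
    exact mmap_inj hinj
      (((star_map_comm _ (subVal S W).map_star A).symm).trans
        (hS.star_mem n _ ((hmem n A).mp hA)))
  · intro n A hA B hB
    refine (hmem n _).mpr ?_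
    rw [mmap_add]
    exact hS.add_mem n _ ((hmem n A).mp hA) _ ((hmem n B).mp hB)
  · intro n A hA r hr
    refine (hmem n _).mpr ?_
    rw [mmap_smul]
    exact hS.smul_mem n _ ((hmem n A).mp hA) r hr
  · intro m n a A hA
    refine (hmem m _).mpr ?_
    rw [matCong_map]
    exact hS.cong_mem m n a _ ((hmem n A).mp hA)
  · intro n A hA hnA
    have h0 : A.map (subVal S W).toLin = 0 := by
      refine hS.proper n _ ((hmem n A).mp hA) ?_
      rw [← mmap_neg]
      exact (hmem n _).mp hnA
    exact mmap_inj hinj (h0.trans (mmap_zero _).symm)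
  · apply hinj
    rw [(subVal S W).map_star, (subVal S W).map_one, hS.star_one]
  · intro n
    refine (hmem n _).mpr ?_
    rw [unitMat_map, (subVal S W).map_one]
    exact hS.one_mem n
  · intro n A hA
    have hA' : star (A.map (subVal S W).toLin) = A.map (subVal S W).toLin := by
      rw [star_map_comm _ (subVal S W).map_star, hA]
    obtain ⟨r, hr, hpos⟩ := hS.orderUnit n (A.map (subVal S W).toLin) hA'
    refine ⟨r, hr, (hmem n _).mpr ?_⟩
    rw [map_smul_unit_add, (subVal S W).map_one]
    exact hpos
  · intro n A hA h
    refine (hmem n _).mpr ?_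
    refine hS.arch n _ (by rw [star_map_comm _ (subVal S W).map_star, hA]) fun ε hε => ?_
    have := (hmem n _).mp (h ε hε)
    rwa [map_smul_unit_add, (subVal S W).map_one] at this

lemma maxPos_map {P P' Q : PreOS} (f : LinSU P P')
    (hf : ∀ l (Pm : Matrix (Fin l) (Fin l) P.V), Pm ∈ P.pos l → Pm.map f.toLin ∈ P'.pos l)
    {n : ℕ} {u : Matrix (Fin n) (Fin n) (TensorProduct ℂ P.V Q.V)}
    (hu : u ∈ maxPos P Q n) :
    u.map (TensorProduct.map f.toLin (LinearMap.id : Q.V →ₗ[ℂ] Q.V)) ∈ maxPos P' Q n := by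
  obtain ⟨hstar, h⟩ := hu
  have hFstar : ∀ x, (TensorProduct.map f.toLin (LinearMap.id : Q.V →ₗ[ℂ] Q.V)) (star x)
      = star ((TensorProduct.map f.toLin (LinearMap.id : Q.V →ₗ[ℂ] Q.V)) x) :=
    fun x => map_tensor_star f (idLinSU Q) x
  refine ⟨?_, fun ε hε => ?_⟩
  · rw [star_map_comm _ hFstar, hstar]
  · have h2 := Dmax_map f.toLin hf (h ε hε)
    rw [map_smul_unit_add] at h2
    have he : (TensorProduct.map f.toLin (LinearMap.id : Q.V →ₗ[ℂ] Q.V)) (P.one ⊗ₜ[ℂ] Q.one)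
        = P'.one ⊗ₜ[ℂ] Q.one := by
      rw [TensorProduct.map_tmul, f.map_one]
      rfl
    rwa [he] at h2

end AuxPre

/-! ## Generic inductive-limit lemmas -/

section AuxLim

variable (Sg : ℕ → PreOS) (φg : ∀ k, LinSU (Sg k) (Sg (k + 1)))

lemma towerFun_self {k : ℕ} (h : k ≤ k) (x : (Sg k).V) :
    towerFun Sg φg k k h x = x := by
  unfold towerFun
  exact Nat.leRecOn_self (C := fun m => (Sg m).V) x

lemma towerFun_succ {k l : ℕ} (h : k ≤ l) (h' : k ≤ l + 1) (x : (Sg k).V) :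
    towerFun Sg φg k (l + 1) h' x = (φg l).toLin (towerFun Sg φg k l h x) := by
  unfold towerFun
  exact Nat.leRecOn_succ (C := fun m => (Sg m).V) (next := fun {m} y => (φg m).toLin y) h x

lemma towerFun_star {k l : ℕ} (h : k ≤ l) (x : (Sg k).V) :
    towerFun Sg φg k l h (star x) = star (towerFun Sg φg k l h x) := by
  induction l, h using Nat.le_induction with
  | base => rw [towerFun_self, towerFun_self]
  | succ l hl ih => rw [towerFun_succ Sg φg hl, towerFun_succ Sg φg hl, ih, (φg l).map_star]

lemma hatSeq_of_le {k l : ℕ} (h : k ≤ l) (x : (Sg k).V) :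
    hatSeq Sg φg k x l = towerFun Sg φg k l h x := dif_pos h

lemma hatSeq_of_not_le {k l : ℕ} (h : ¬ k ≤ l) (x : (Sg k).V) :
    hatSeq Sg φg k x l = 0 := dif_neg h

lemma hatSeq_self (k : ℕ) (x : (Sg k).V) : hatSeq Sg φg k x k = x := by
  rw [hatSeq_of_le Sg φg le_rfl, towerFun_self]

lemma hatSeq_step {k l : ℕ} (h : k ≤ l) (x : (Sg k).V) :
    hatSeq Sg φg k x (l + 1) = (φg l).toLin (hatSeq Sg φg k x l) := by
  rw [hatSeq_of_le Sg φg h, hatSeq_of_le Sg φg (h.trans l.le_succ), towerFun_succ Sg φg h]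

lemma coh_spec (x : coh Sg φg) :
    ∃ k0, ∀ k, k0 ≤ k → x.1 (k + 1) = (φg k).toLin (x.1 k) := x.2

/-- A coherence threshold for an eventually coherent sequence. -/
noncomputable def cIdx (x : coh Sg φg) : ℕ := (coh_spec Sg φg x).choose

lemma cIdx_spec (x : coh Sg φg) :
    ∀ k, cIdx Sg φg x ≤ k → x.1 (k + 1) = (φg k).toLin (x.1 k) :=
  (coh_spec Sg φg x).choose_spec

end AuxLim

/-! ## The canonical map for Statement 7 -/

section St7

variable (S : PreOS) (W : ℕ → StarSubmodule S)
  (hmono : ∀ k, (W k).toSub ≤ (W (k + 1)).toSub) (T : PreOS)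

/-- The inductive sequence `S_k ⊗_max T`. -/
def Sseq : ℕ → PreOS := fun k => maxTen (SubOS S (W k)) T

/-- The connecting maps `i_k ⊗ id`. -/
def phiSeq : ∀ k, LinSU (Sseq S W T k) (Sseq S W T (k + 1)) := fun k =>
  tensorMapLinSU (inclSub S (W k) (W (k + 1)) (hmono k)) (idLinSU T)
    (maxPos (SubOS S (W k)) T) (maxPos (SubOS S (W (k + 1))) T)

/-- The canonical ucp maps `i^{(k)} ⊗ id : S_k ⊗_max T → S ⊗_max T`. -/
def jm (k : ℕ) : TensorProduct ℂ (SubOS S (W k)).V T.V →ₗ[ℂ] TensorProduct ℂ S.V T.V :=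
  TensorProduct.map (subVal S (W k)).toLin (LinearMap.id : T.V →ₗ[ℂ] T.V)

lemma jm_phi (k : ℕ) (y : (Sseq S W T k).V) :
    jm S W T (k + 1) ((phiSeq S W hmono T k).toLin y) = jm S W T k y := by
  induction y using TensorProduct.induction_on with
  | zero => exact map_zero (jm S W T (k + 1) ∘ₗ (phiSeq S W hmono T k).toLin)
  | tmul x t => rfl
  | add a b ha hb =>
    exact (map_add (jm S W T (k + 1) ∘ₗ (phiSeq S W hmono T k).toLin) a b).trans
      ((congrArg₂ (· + ·) ha hb).trans (map_add (jm S W T k) a b).symm)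

lemma jm_inj (k : ℕ) : Function.Injective (jm S W T k) := by
  have : jm S W T k = LinearMap.rTensor T.V (subVal S (W k)).toLin := rfl
  rw [this]
  exact Module.Flat.rTensor_preserves_injective_linearMap _ (Submodule.injective_subtype _)

lemma jm_star (k : ℕ) (u : (Sseq S W T k).V) :
    jm S W T k (star u) = star (jm S W T k u) :=
  map_tensor_star (subVal S (W k)) (idLinSU T) u

lemma jm_one (k : ℕ) :
    jm S W T k ((SubOS S (W k)).one ⊗ₜ[ℂ] T.one) = S.one ⊗ₜ[ℂ] T.one := rfl

lemma jm_cp (k : ℕ) {l : ℕ} {Pm : Matrix (Fin l) (Fin l) (SubOS S (W k)).V}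
    (h : Pm ∈ (SubOS S (W k)).pos l) : Pm.map (subVal S (W k)).toLin ∈ S.pos l := h

lemma incl_cp (k : ℕ) : ∀ (l : ℕ) (Pm : Matrix (Fin l) (Fin l) (SubOS S (W k)).V),
    Pm ∈ (SubOS S (W k)).pos l →
      Pm.map (inclSub S (W k) (W (k + 1)) (hmono k)).toLin ∈ (SubOS S (W (k + 1))).pos l := by
  intro l Pm h
  show (Pm.map _).map _ ∈ S.pos l
  exact h

lemma jm_chain (x : ∀ k, (Sseq S W T k).V) (k0 : ℕ)
    (h : ∀ k, k0 ≤ k → x (k + 1) = (phiSeq S W hmono T k).toLin (x k)) :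
    ∀ k, k0 ≤ k → jm S W T k (x k) = jm S W T k0 (x k0) := by
  intro k hk
  induction k, hk using Nat.le_induction with
  | base => rfl
  | succ k hk ih => rw [h k hk, jm_phi]; exact ih

lemma jm_tower {k l : ℕ} (h : k ≤ l) (x : (Sseq S W T k).V) :
    jm S W T l (towerFun (Sseq S W T) (phiSeq S W hmono T) k l h x) = jm S W T k x := by
  induction l, h using Nat.le_induction with
  | base => rw [towerFun_self]
  | succ l hl ih => rw [towerFun_succ _ _ hl, jm_phi]; exact ih

/-- The limit value of an eventually coherent sequence in `S ⊗ T`. -/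
noncomputable def LimFun (x : coh (Sseq S W T) (phiSeq S W hmono T)) :
    TensorProduct ℂ S.V T.V :=
  jm S W T (cIdx _ _ x) (x.1 (cIdx _ _ x))

lemma LimFun_eq (x : coh (Sseq S W T) (phiSeq S W hmono T)) (k : ℕ)
    (hk : cIdx _ _ x ≤ k) :
    LimFun S W hmono T x = jm S W T k (x.1 k) :=
  (jm_chain S W hmono T x.1 _ (cIdx_spec _ _ x) k hk).symm

lemma LimFun_add (x y : coh (Sseq S W T) (phiSeq S W hmono T)) :
    LimFun S W hmono T (x + y) = LimFun S W hmono T x + LimFun S W hmono T y := by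
  set K := max (cIdx _ _ (x + y)) (max (cIdx _ _ x) (cIdx _ _ y)) with hK
  rw [LimFun_eq S W hmono T (x + y) K (le_max_left _ _),
    LimFun_eq S W hmono T x K (le_trans (le_max_left _ _) (le_max_right _ _)),
    LimFun_eq S W hmono T y K (le_trans (le_max_right _ _) (le_max_right _ _))]
  have hxy : (x + y).1 K = x.1 K + y.1 K := rfl
  rw [hxy]
  exact map_add (jm S W T K) _ _

lemma LimFun_smul (c : ℂ) (x : coh (Sseq S W T) (phiSeq S W hmono T)) :
    LimFun S W hmono T (c • x) = c • LimFun S W hmono T x := by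
  set K := max (cIdx _ _ (c • x)) (cIdx _ _ x) with hK
  rw [LimFun_eq S W hmono T (c • x) K (le_max_left _ _),
    LimFun_eq S W hmono T x K (le_max_right _ _)]
  have hcx : (c • x).1 K = c • x.1 K := rfl
  rw [hcx]
  exact map_smul (jm S W T K) _ _

lemma LimFun_star (x : coh (Sseq S W T) (phiSeq S W hmono T)) :
    LimFun S W hmono T (star x) = star (LimFun S W hmono T x) := by
  set K := max (cIdx _ _ (star x)) (cIdx _ _ x) with hK
  rw [LimFun_eq S W hmono T (star x) K (le_max_left _ _),
    LimFun_eq S W hmono T x K (le_max_right _ _)]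
  have hsx : (star x).1 K = star (x.1 K) := rfl
  rw [hsx]
  exact jm_star S W T K _

lemma LimFun_evK (x : coh (Sseq S W T) (phiSeq S W hmono T))
    (hx : x ∈ evK (Sseq S W T) (phiSeq S W hmono T)) : LimFun S W hmono T x = 0 := by
  obtain ⟨a, ha⟩ := hx
  rw [LimFun_eq S W hmono T x (max (cIdx _ _ x) a) (le_max_left _ _),
    ha _ (le_max_right _ _)]
  exact map_zero _

/-- The limit value map as a linear map. -/
noncomputable def LimLin :
    coh (Sseq S W T) (phiSeq S W hmono T) →ₗ[ℂ] TensorProduct ℂ S.V T.V where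
  toFun := LimFun S W hmono T
  map_add' := LimFun_add S W hmono T
  map_smul' := LimFun_smul S W hmono T

/-- The canonical map `Ψ` of Statement 7. -/
noncomputable def Psi :
    Qspace (Sseq S W T) (phiSeq S W hmono T) →ₗ[ℂ] TensorProduct ℂ S.V T.V :=
  Submodule.liftQ (evK _ _) (LimLin S W hmono T)
    (fun x hx => LinearMap.mem_ker.mpr (LimFun_evK S W hmono T x hx))

lemma Psi_mk (a : coh (Sseq S W T) (phiSeq S W hmono T)) :
    Psi S W hmono T (Submodule.Quotient.mk a) = LimFun S W hmono T a := rfl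

lemma Psi_star (q : Qspace (Sseq S W T) (phiSeq S W hmono T)) :
    Psi S W hmono T (star q) = star (Psi S W hmono T q) := by
  obtain ⟨a, rfl⟩ := Submodule.Quotient.mk_surjective _ q
  rw [qspace_star_mk, Psi_mk, Psi_mk, LimFun_star]

lemma Psi_limCan (k : ℕ) (x : (Sseq S W T k).V) :
    Psi S W hmono T (limCan (Sseq S W T) (phiSeq S W hmono T) k x) = jm S W T k x := by
  rw [limCan, Psi_mk]
  set a : coh (Sseq S W T) (phiSeq S W hmono T) :=
    ⟨hatSeq _ _ k x, hatSeq_mem _ _ k x⟩ with ha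
  rw [LimFun_eq S W hmono T a (max (cIdx _ _ a) k) (le_max_left _ _)]
  have h1 : a.1 (max (cIdx _ _ a) k)
      = towerFun (Sseq S W T) (phiSeq S W hmono T) k _ (le_max_right _ _) x :=
    hatSeq_of_le _ _ (le_max_right _ _) x
  rw [h1, jm_tower]

lemma Psi_one : Psi S W hmono T (indLim (Sseq S W T) (phiSeq S W hmono T)).one
    = (maxTen S T).one := by
  show Psi S W hmono T (limOne _ _) = _
  rw [limOne, Psi_mk]
  set a : coh (Sseq S W T) (phiSeq S W hmono T) :=
    ⟨fun k => (Sseq S W T k).one, _⟩ with ha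
  exact (LimFun_eq S W hmono T a (cIdx _ _ a) le_rfl).trans rfl

lemma Psi_inj : Function.Injective (Psi S W hmono T) := by
  have key : ∀ q, Psi S W hmono T q = 0 → q = 0 := by
    intro q hq
    obtain ⟨a, rfl⟩ := Submodule.Quotient.mk_surjective _ q
    rw [Psi_mk] at hq
    rw [Submodule.Quotient.mk_eq_zero]
    refine ⟨cIdx _ _ a, fun k hk => ?_⟩
    apply jm_inj S W T k
    refine (LimFun_eq S W hmono T a k hk).symm.trans (Eq.trans ?_ (map_zero (jm S W T k)).symm)
    exact hq
  intro q q' h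
  have := key (q - q') (by rw [map_sub, h, sub_self])
  rwa [sub_eq_zero] at this

lemma Psi_surj (hunion : ∀ x : S.V, ∃ k, x ∈ (W k).toSub) :
    Function.Surjective (Psi S W hmono T) := by
  intro u
  have : ∀ u : (maxTen S T).V, u ∈ LinearMap.range (Psi S W hmono T) := by
    intro u
    induction u using TensorProduct.induction_on with
    | zero => exact zero_mem _
    | tmul x t =>
      obtain ⟨k, hk⟩ := hunion x
      exact ⟨limCan _ _ k (((⟨x, hk⟩ : (W k).toSub) : (SubOS S (W k)).V) ⊗ₜ[ℂ] t),
        by exact (Psi_limCan S W hmono T _ _).trans rfl⟩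
    | add a b ha hb => exact add_mem ha hb
  exact this u

lemma Psi_limOne : Psi S W hmono T (limOne (Sseq S W T) (phiSeq S W hmono T))
    = S.one ⊗ₜ[ℂ] T.one := Psi_one S W hmono T

lemma Psi_unitEntry (n : ℕ) (i j : Fin n) :
    Psi S W hmono T (unitMat (limOne (Sseq S W T) (phiSeq S W hmono T)) n i j)
      = unitMat (S.one ⊗ₜ[ℂ] T.one) n i j := by
  by_cases hij : i = j
  · simp only [unitMat, Matrix.of_apply, if_pos hij]
    exact Psi_limOne S W hmono T
  · simp only [unitMat, Matrix.of_apply, if_neg hij, map_zero]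

lemma Psi_map_unit_add (n : ℕ) (c : ℂ) (U : Matrix (Fin n) (Fin n)
    (Qspace (Sseq S W T) (phiSeq S W hmono T))) :
    (c • unitMat (limOne (Sseq S W T) (phiSeq S W hmono T)) n + U).map (Psi S W hmono T)
      = c • unitMat (S.one ⊗ₜ[ℂ] T.one) n + U.map (Psi S W hmono T) := by
  rw [map_smul_unit_add, Psi_limOne]

lemma star_limOne (hS : S.IsOpSys) (hT : T.IsOpSys) :
    star (limOne (Sseq S W T) (phiSeq S W hmono T))
      = limOne (Sseq S W T) (phiSeq S W hmono T) := by
  rw [limOne, qspace_star_mk]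
  congr 1
  apply Subtype.ext
  funext k
  show star ((Sseq S W T k).one) = (Sseq S W T k).one
  have h1 : star ((SubOS S (W k)).one) = (SubOS S (W k)).one :=
    (SubOS_isOpSys S hS (W k)).star_one
  show star ((SubOS S (W k)).one ⊗ₜ[ℂ] T.one) = (SubOS S (W k)).one ⊗ₜ[ℂ] T.one
  rw [tstar_tmul, h1, hT.star_one]

include hmono in
lemma W_le {k l : ℕ} (h : k ≤ l) : (W k).toSub ≤ (W l).toSub := by
  induction l, h using Nat.le_induction with
  | base => exact le_rfl
  | succ l hl ih => exact ih.trans (hmono l)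

end St7

/-- if `S` is the union of an increasing sequence of operator subsystems
`S_k`, then `S ⊗_max T` is the inductive limit of `{S_k ⊗_max T, i_k ⊗ id_T}`; the
canonical map `Ψ` induced by the ucp maps `i^{(k)} ⊗ id_T` is a unital complete order
isomorphism. -/
theorem statement7 (S : PreOS) (hS : S.IsOpSys) (W : ℕ → StarSubmodule S)
    (hmono : ∀ k, (W k).toSub ≤ (W (k + 1)).toSub)
    (hunion : ∀ x : S.V, ∃ k, x ∈ (W k).toSub)
    (T : PreOS) (hT : T.IsOpSys) :
    IsIndLimitOf (fun k => maxTen (SubOS S (W k)) T)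
      (fun k => tensorMapLinSU (inclSub S (W k) (W (k + 1)) (hmono k)) (idLinSU T)
        (maxPos (SubOS S (W k)) T) (maxPos (SubOS S (W (k + 1))) T))
      (maxTen S T)
      (fun k x => TensorProduct.map (subVal S (W k)).toLin
        (LinearMap.id : T.V →ₗ[ℂ] T.V) x) := by
  classical
  have hone1 : star (S.one ⊗ₜ[ℂ] T.one) = S.one ⊗ₜ[ℂ] T.one := by
    rw [tstar_tmul, hS.star_one, hT.star_one]
  refine ⟨Psi S W hmono T, fun k x => Psi_limCan S W hmono T k x,
    ⟨Psi_inj S W hmono T, Psi_surj S W hmono T hunion⟩, Psi_one S W hmono T, fun n => ?_⟩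
  show ∀ U : Matrix (Fin n) (Fin n) (Qspace (Sseq S W T) (phiSeq S W hmono T)),
      U ∈ limPos (Sseq S W T) (phiSeq S W hmono T) n ↔
        U.map (Psi S W hmono T) ∈ maxPos S T n
  intro U
  constructor
  · -- forward: limit positivity implies positivity in S ⊗max T
    rintro ⟨hUstar, harch⟩
    refine ⟨?_, fun ε hε => ?_⟩
    · exact (star_map_comm _ (Psi_star S W hmono T) U).trans
        (congrArg (fun X => Matrix.map X (Psi S W hmono T)) hUstar)
    · obtain ⟨hst2, A, ⟨hAstar, k0, hA⟩, hmk⟩ := harch (ε / 2) (half_pos hε)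
      set K := max k0 (Finset.univ.sup fun p : Fin n × Fin n => cIdx _ _ (A p.1 p.2)) with hK
      have hk0K : k0 ≤ K := le_max_left _ _
      have hcK : ∀ i j, cIdx _ _ (A i j) ≤ K := by
        intro i j
        have h1 : cIdx _ _ (A i j)
            ≤ Finset.univ.sup (fun p : Fin n × Fin n => cIdx _ _ (A p.1 p.2)) :=
          Finset.le_sup (f := fun p : Fin n × Fin n => cIdx _ _ (A p.1 p.2))
            (Finset.mem_univ (i, j))
        exact h1.trans (le_max_right _ _)
      obtain ⟨hposstar, hposarch⟩ := (hA K hk0K).2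
      have h3 := Dmax_map (Q := T) (subVal S (W K)).toLin (fun l Pm h => h)
        (hposarch (ε / 2) (half_pos hε))
      have hmap : ((Matrix.of fun i j => (A i j).1 K :
            Matrix (Fin n) (Fin n) (TensorProduct ℂ (SubOS S (W K)).V T.V))).map
            (jm S W T K)
          = (↑(ε / 2) : ℂ) • unitMat (S.one ⊗ₜ[ℂ] T.one) n + U.map (Psi S W hmono T) := by
        have h4 : ((Matrix.of fun i j => (A i j).1 K :
              Matrix (Fin n) (Fin n) (TensorProduct ℂ (SubOS S (W K)).V T.V))).map
              (jm S W T K)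
            = ((↑(ε / 2) : ℂ) • unitMat (limOne (Sseq S W T) (phiSeq S W hmono T)) n + U).map
                (Psi S W hmono T) := by
          ext i j
          show jm S W T K ((A i j).1 K) = Psi S W hmono T
            (((↑(ε / 2) : ℂ) • unitMat (limOne (Sseq S W T) (phiSeq S W hmono T)) n + U) i j)
          rw [← hmk i j, ← LimFun_eq S W hmono T (A i j) K (hcK i j)]
          rfl
        rw [h4, Psi_map_unit_add]
      show (↑ε : ℂ) • unitMat (S.one ⊗ₜ[ℂ] T.one) n + U.map (Psi S W hmono T) ∈ Dmax S T n
      have hsplit : (↑ε : ℂ) • unitMat (S.one ⊗ₜ[ℂ] T.one) n + U.map (Psi S W hmono T)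
          = (↑(ε / 2) : ℂ) • unitMat (S.one ⊗ₜ[ℂ] T.one) n
            + ((↑(ε / 2) : ℂ) • unitMat (S.one ⊗ₜ[ℂ] T.one) n + U.map (Psi S W hmono T)) := by
        rw [← add_assoc, ← add_smul, ← Complex.ofReal_add, add_halves]
      rw [hsplit, ← hmap]
      have hjm_eq : TensorProduct.map (subVal S (W K)).toLin
          (LinearMap.id : T.V →ₗ[ℂ] T.V) = jm S W T K := rfl
      rw [hjm_eq] at h3
      exact (congrArg (· ∈ Dmax S T n) (map_smul_unit_add (jm S W T K) ((↑(ε / 2) : ℂ))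
        ((SubOS S (W K)).one ⊗ₜ[ℂ] T.one) (Matrix.of fun i j => (A i j).1 K :
          Matrix (Fin n) (Fin n) (TensorProduct ℂ (SubOS S (W K)).V T.V)))).mp h3
  · -- backward: positivity in S ⊗max T reflects to the limit
    rintro ⟨hst, harch⟩
    have hstarU : star U = U := mmap_inj (Psi_inj S W hmono T)
      ((star_map_comm _ (Psi_star S W hmono T) U).symm.trans hst)
    refine ⟨hstarU, fun ε hε => ?_⟩
    obtain ⟨l, m, Pm, Qm, a, hPm, hQm, heq⟩ := harch (ε / 2) (half_pos hε)
    -- lift the S-side matrix into some W K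
    have hch : ∀ p : Fin l × Fin l, ∃ k, Pm p.1 p.2 ∈ (W k).toSub := fun p => hunion _
    choose g hg using hch
    set K := Finset.univ.sup g with hKdef
    have hmemK : ∀ i j, Pm i j ∈ (W K).toSub := fun i j =>
      W_le S W hmono (Finset.le_sup (Finset.mem_univ (i, j))) (hg (i, j))
    set Pm' : Matrix (Fin l) (Fin l) (SubOS S (W K)).V :=
      Matrix.of fun i j => (⟨Pm i j, hmemK i j⟩ : (W K).toSub) with hPm'def
    have hPmmap : Pm'.map (subVal S (W K)).toLin = Pm := by
      ext i j; rfl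
    have hPm' : Pm' ∈ (SubOS S (W K)).pos l := by
      show Pm'.map (subVal S (W K)).toLin ∈ S.pos l
      rw [hPmmap]; exact hPm
    set v := matCong a (tensMat Pm' Qm) with hvdef
    have hv : v ∈ Dmax (SubOS S (W K)) T n := ⟨l, m, Pm', Qm, a, hPm', hQm, rfl⟩
    have hjm_eq : TensorProduct.map (subVal S (W K)).toLin
        (LinearMap.id : T.V →ₗ[ℂ] T.V) = jm S W T K := rfl
    have hjv : v.map (jm S W T K)
        = (↑(ε / 2) : ℂ) • unitMat (S.one ⊗ₜ[ℂ] T.one) n + U.map (Psi S W hmono T) := by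
      rw [hvdef, matCong_map, ← hjm_eq, tensMat_map, hPmmap, mmap_id, ← heq]
    set w := (↑(ε / 2) : ℂ) • unitMat ((SubOS S (W K)).one ⊗ₜ[ℂ] T.one) n + v with hwdef
    have hjw : w.map (jm S W T K)
        = (↑ε : ℂ) • unitMat (S.one ⊗ₜ[ℂ] T.one) n + U.map (Psi S W hmono T) := by
      rw [hwdef, map_smul_unit_add, hjv, jm_one, ← add_assoc, ← add_smul,
        ← Complex.ofReal_add, add_halves]
    have hwstar : star w = w := by
      apply mmap_inj (jm_inj S W T K)
      exact (star_map_comm (jm S W T K) (jm_star S W T K) w).symm.trans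
        (by rw [hjw, star_add, star_smul_real, star_unitMat _ hone1, hst])
    have hw : w ∈ maxPos (SubOS S (W K)) T n := by
      refine ⟨hwstar, fun δ hδ => ?_⟩
      have hδε : (↑δ : ℂ) • unitMat ((SubOS S (W K)).one ⊗ₜ[ℂ] T.one) n + w
          = (↑(δ + ε / 2) : ℂ) • unitMat ((SubOS S (W K)).one ⊗ₜ[ℂ] T.one) n + v := by
        rw [hwdef, ← add_assoc, ← add_smul, ← Complex.ofReal_add]
      rw [hδε]
      exact Dmax_unit_add (SubOS_isOpSys S hS (W K)) hT hv (δ + ε / 2) (by positivity)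
    -- the representing matrix over the limit
    set A : Matrix (Fin n) (Fin n) (coh (Sseq S W T) (phiSeq S W hmono T)) :=
      Matrix.of fun i j =>
        (⟨hatSeq (Sseq S W T) (phiSeq S W hmono T) K (w i j),
          hatSeq_mem (Sseq S W T) (phiSeq S W hmono T) K (w i j)⟩ :
            coh (Sseq S W T) (phiSeq S W hmono T)) with hAdef
    have hpos : ∀ k, K ≤ k →
        ((Matrix.of fun i j => (A i j).1 k :
          Matrix (Fin n) (Fin n) (TensorProduct ℂ (SubOS S (W k)).V T.V)))
          ∈ maxPos (SubOS S (W k)) T n := by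
      intro k hk
      induction k, hk using Nat.le_induction with
      | base =>
        have hbase : ((Matrix.of fun i j => (A i j).1 K :
            Matrix (Fin n) (Fin n) (TensorProduct ℂ (SubOS S (W K)).V T.V))) = w := by
          ext i j
          exact hatSeq_self (Sseq S W T) (phiSeq S W hmono T) K (w i j)
        rw [hbase]
        exact hw
      | succ k hk ih =>
        have hstep : ((Matrix.of fun i j => (A i j).1 (k + 1) :
            Matrix (Fin n) (Fin n) (TensorProduct ℂ (SubOS S (W (k + 1))).V T.V)))
            = ((Matrix.of fun i j => (A i j).1 k :
              Matrix (Fin n) (Fin n) (TensorProduct ℂ (SubOS S (W k)).V T.V))).map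
                (phiSeq S W hmono T k).toLin := by
          ext i j
          exact hatSeq_step (Sseq S W T) (phiSeq S W hmono T) hk (w i j)
        rw [hstep]
        exact maxPos_map (inclSub S (W k) (W (k + 1)) (hmono k)) (incl_cp S W hmono k) ih
    refine ⟨?_, A, ⟨?_, K, fun k hk => ⟨fun i j => hatSeq_step (Sseq S W T) (phiSeq S W hmono T) hk (w i j), hpos k hk⟩⟩,
      fun i j => ?_⟩
    · rw [star_add, star_smul_real, star_unitMat _ (star_limOne S W hmono T hS hT), hstarU]
    · -- star A = A
      refine Matrix.ext fun i j => ?_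
      rw [Matrix.star_apply]
      refine Subtype.ext (funext fun k => ?_)
      show star ((A j i).1 k) = (A i j).1 k
      by_cases hKk : K ≤ k
      · show star (hatSeq (Sseq S W T) (phiSeq S W hmono T) K (w j i) k) = hatSeq (Sseq S W T) (phiSeq S W hmono T) K (w i j) k
        refine (congrArg star (hatSeq_of_le (Sseq S W T) (phiSeq S W hmono T) hKk (w j i))).trans ((towerFun_star (Sseq S W T) (phiSeq S W hmono T) hKk (w j i)).symm.trans
          (Eq.trans ?_ (hatSeq_of_le (Sseq S W T) (phiSeq S W hmono T) hKk (w i j)).symm))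
        congr 1
        have hws := congrFun (congrFun hwstar i) j
        rw [Matrix.star_apply] at hws
        exact hws
      · show star (hatSeq (Sseq S W T) (phiSeq S W hmono T) K (w j i) k) = hatSeq (Sseq S W T) (phiSeq S W hmono T) K (w i j) k
        exact (congrArg star (hatSeq_of_not_le (Sseq S W T) (phiSeq S W hmono T) hKk (w j i))).trans
          ((star_zero _).trans (hatSeq_of_not_le (Sseq S W T) (phiSeq S W hmono T) hKk (w i j)).symm)
    · -- the classes of the entries of A
      apply Psi_inj S W hmono T
      have h1 : Psi S W hmono T (Submodule.Quotient.mk (A i j)) = jm S W T K (w i j) :=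
        Psi_limCan S W hmono T K (w i j)
      rw [h1]
      have h2 : Psi S W hmono T
          (((↑ε : ℂ) • unitMat (limOne (Sseq S W T) (phiSeq S W hmono T)) n + U) i j)
          = ((↑ε : ℂ) • unitMat (S.one ⊗ₜ[ℂ] T.one) n + U.map (Psi S W hmono T)) i j := by
        show (((↑ε : ℂ) • unitMat (limOne (Sseq S W T) (phiSeq S W hmono T)) n + U).map
          (Psi S W hmono T)) i j = _
        rw [Psi_map_unit_add]
      rw [h2, ← hjw]
      rfl

end
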